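/- Let μ be a finite nonnegative compactly supported Borel measure on ℝ² and for ω ∈ S¹ define the projected measure μ_ω on ℝ by ∫ f dμ_ω = ∫ f(x·ω) dμ(x). Suppose supp μ ⊆ B(0,R₀). Then for 0 < τ < 1 and t ∈ ℝ, μ_ω ∗ K¹_τ(t) ≤ C ∫_{−2R}^{2R} (μ ∗ K²_{τ+1})(tω + sω^⊥) ds, where K¹_τ(u) = |u|^{−τ}χ_{[−1,1]}(u), K²_{τ+1}(x) = |x|^{−(τ+1)}χ_{B(0,R)}(x), and R is sufficiently large depending on R₀. -/

import Mathlib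

/-!
Fix `x` in the support and put `u = t - ⟪x, ω⟫`, `b = ⟪x, p⟫`. For `s ∈ [b, b + |u|]` the point
`z = tω + sp - x` has coordinates `u` and `s - b` in the orthonormal basis `(ω, p)`, so
`|u| ≤ ‖z‖ ≤ 2|u|` and `K²_{τ+1}(z) ≥ |u|^{-(τ+1)} / 4`. Integrating over this segment of length
`|u|` gives `K¹_τ(u) ≤ 4 ∫ K²_{τ+1}(tω + sp - x) ds`, and integrating in `x` against `μ`
(Tonelli) gives the theorem with `C = 4`, `R = R₀ + 2`.
-/

open MeasureTheory Metric Set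
open scoped ENNReal

noncomputable section

abbrev Euc (d : ℕ) := EuclideanSpace ℝ (Fin d)

/-- The truncated Riesz kernel `K_ρ(x) = |x|^{-ρ} χ_{B(0,R)}(x)`. -/
def trKer (d : ℕ) (ρ R : ℝ) (x : Euc d) : ℝ :=
  (Metric.ball (0 : Euc d) R).indicator (fun z => ‖z‖ ^ (-ρ)) x

/-- The one-dimensional kernel `K¹_τ(u) = |u|^{-τ} χ_{[-1,1]}(u)`. -/
def ker1 (τ : ℝ) (u : ℝ) : ℝ := (Set.Icc (-1 : ℝ) 1).indicator (fun v => |v| ^ (-τ)) u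

open scoped RealInnerProductSpace

theorem abs_inner_le_norm_of_norm_eq_one {E : Type*} [NormedAddCommGroup E]
    [InnerProductSpace ℝ E] {ω : E} (hω : ‖ω‖ = 1) (z : E) : |⟪z, ω⟫| ≤ ‖z‖ := by
  simpa [hω] using abs_real_inner_le_norm z ω

theorem norm_sq_eq_inner_sq_add_inner_sq {E : Type*} [NormedAddCommGroup E]
    [InnerProductSpace ℝ E] (hE : Module.finrank ℝ E = 2) {ω p : E} (hω : ‖ω‖ = 1)
    (hp : ‖p‖ = 1) (hωp : ⟪ω, p⟫ = 0) (z : E) : ‖z‖ ^ 2 = ⟪z, ω⟫ ^ 2 + ⟪z, p⟫ ^ 2 := by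
  have hon : Orthonormal ℝ ![ω, p] := by simp [hω, hp, hωp]
  let b := OrthonormalBasis.mk hon
    (hon.linearIndependent.span_eq_top_of_card_eq_finrank (by simp [hE])).ge
  simpa [b, Fin.sum_univ_two] using (b.sum_sq_inner_left z).symm

theorem norm_le_two_mul_abs_inner {E : Type*} [NormedAddCommGroup E] [InnerProductSpace ℝ E]
    (hE : Module.finrank ℝ E = 2) {ω p : E} (hω : ‖ω‖ = 1) (hp : ‖p‖ = 1) (hωp : ⟪ω, p⟫ = 0)
    {z : E} (hz : |⟪z, p⟫| ≤ |⟪z, ω⟫|) : ‖z‖ ≤ 2 * |⟪z, ω⟫| := by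
  refine pow_le_pow_iff_left₀ (norm_nonneg z) (by positivity) two_ne_zero |>.mp ?_
  rw [norm_sq_eq_inner_sq_add_inner_sq hE hω hp hωp, mul_pow, sq_abs]
  nlinarith [sq_abs ⟪z, p⟫, sq_abs ⟪z, ω⟫, abs_nonneg ⟪z, p⟫]

theorem rpow_neg_le_four_mul_trKer {n : ℕ} {ρ R a : ℝ} {z : Euc n} (ha : 0 < a)
    (hρ₀ : 0 ≤ ρ) (hρ₂ : ρ ≤ 2) (haz : a ≤ ‖z‖) (hz : ‖z‖ ≤ 2 * a) (hzR : ‖z‖ < R) :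
    a ^ (-ρ) ≤ 4 * trKer n ρ R z := by
  have hmem : z ∈ ball (0 : Euc n) R := mem_ball_zero_iff.mpr hzR
  rw [trKer, indicator_of_mem hmem]
  have h4 : (1 : ℝ) ≤ 4 * 2 ^ (-ρ) := by
    calc (1 : ℝ) = 4 * 2 ^ (-2 : ℝ) := by norm_num
      _ ≤ 4 * 2 ^ (-ρ) := by
        gcongr 4 * ?_
        exact Real.rpow_le_rpow_of_exponent_le (by norm_num) (by linarith)
  calc a ^ (-ρ) ≤ 4 * 2 ^ (-ρ) * a ^ (-ρ) := le_mul_of_one_le_left (by positivity) h4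
    _ = 4 * (2 * a) ^ (-ρ) := by rw [Real.mul_rpow (by norm_num) ha.le]; ring
    _ ≤ 4 * ‖z‖ ^ (-ρ) := by
      gcongr 4 * ?_
      exact Real.rpow_le_rpow_of_nonpos (ha.trans_le haz) hz (by linarith)

theorem measurable_trKer (d : ℕ) (ρ R : ℝ) : Measurable (trKer d ρ R) :=
  (measurable_norm.pow_const _).indicator measurableSet_ball

theorem ofReal_ker1_le_lintegral_trKer {R τ t : ℝ} {ω p x : Euc 2} (hτ₀ : 0 < τ) (hτ₁ : τ ≤ 1)
    (hω : ‖ω‖ = 1) (hp : ‖p‖ = 1) (hωp : ⟪ω, p⟫ = 0) (hx : ‖x‖ + 1 ≤ 2 * R) (hR : 2 < R) :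
    ENNReal.ofReal (ker1 τ (t - ⟪x, ω⟫)) ≤ ENNReal.ofReal 4 *
      ∫⁻ s in Icc (-(2 * R)) (2 * R), ENNReal.ofReal (trKer 2 (τ + 1) R (t • ω + s • p - x)) := by
  set u := t - ⟪x, ω⟫
  by_cases hu : u ∈ Icc (-1 : ℝ) 1 ∧ u ≠ 0
  swap
  · suffices ker1 τ u = 0 by simp [this]
    rw [not_and_or, not_not] at hu
    rcases hu with hu | hu
    · exact indicator_of_notMem hu _
    · -- `0 ^ (-τ) = 0` for `τ ≠ 0` in Lean's `rpow`
      simp [ker1, hu, Real.zero_rpow (neg_ne_zero.mpr hτ₀.ne')]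
  obtain ⟨hu₁, hu₀⟩ := hu
  set a := |u|
  have ha₀ : 0 < a := abs_pos.mpr hu₀
  have ha₁ : a ≤ 1 := abs_le.mpr hu₁
  set b := ⟪x, p⟫
  have hb : |b| ≤ ‖x‖ := abs_inner_le_norm_of_norm_eq_one hp x
  have hsegment : ∀ s ∈ Icc b (b + a), ENNReal.ofReal (a ^ (-(τ + 1))) ≤
      ENNReal.ofReal 4 * ENNReal.ofReal (trKer 2 (τ + 1) R (t • ω + s • p - x)) := by
    intro s hs
    set z := t • ω + s • p - x
    have hzω : ⟪z, ω⟫ = u := by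
      simp [z, u, inner_sub_left, inner_add_left, real_inner_smul_left, real_inner_comm ω p, hωp,
        hω]
    have hzp : ⟪z, p⟫ = s - b := by
      simp [z, b, inner_sub_left, inner_add_left, real_inner_smul_left, hωp, hp]
    have hsb : |s - b| ≤ a := abs_le.mpr ⟨by linarith [hs.1], by linarith [hs.2]⟩
    have hz₂ : ‖z‖ ≤ 2 * a := by
      simpa [hzω] using norm_le_two_mul_abs_inner finrank_euclideanSpace_fin hω hp hωp
        (z := z) (by rwa [hzω, hzp])
    have hz₁ : a ≤ ‖z‖ := by simpa [hzω] using abs_inner_le_norm_of_norm_eq_one hω z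
    rw [← ENNReal.ofReal_mul (by norm_num)]
    exact ENNReal.ofReal_le_ofReal <|
      rpow_neg_le_four_mul_trKer ha₀ (by linarith) (by linarith) hz₁ hz₂ (by linarith)
  have hpow : a ^ (-τ) = a ^ (-(τ + 1)) * a := by
    rw [← Real.rpow_add_one ha₀.ne']; ring_nf
  calc ENNReal.ofReal (ker1 τ u) = ENNReal.ofReal (a ^ (-(τ + 1))) * volume (Icc b (b + a)) := by
        rw [ker1, indicator_of_mem hu₁, hpow, Real.volume_Icc, add_sub_cancel_left,
          ENNReal.ofReal_mul (by positivity)]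
    _ = ∫⁻ _ in Icc b (b + a), ENNReal.ofReal (a ^ (-(τ + 1))) := (setLIntegral_const _ _).symm
    _ ≤ ∫⁻ s in Icc b (b + a),
          ENNReal.ofReal 4 * ENNReal.ofReal (trKer 2 (τ + 1) R (t • ω + s • p - x)) :=
        setLIntegral_mono' measurableSet_Icc hsegment
    _ ≤ ENNReal.ofReal 4 * ∫⁻ s in Icc (-(2 * R)) (2 * R),
          ENNReal.ofReal (trKer 2 (τ + 1) R (t • ω + s • p - x)) := by
        rw [lintegral_const_mul' _ _ ENNReal.ofReal_ne_top]
        obtain ⟨hb₁, hb₂⟩ := abs_le.mp hb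
        gcongr <;> linarith

theorem stmt14 :
    ∃ C > (0 : ℝ), ∀ R₀ > (0 : ℝ), ∃ R > (0 : ℝ),
      ∀ (μ : Measure (Euc 2)), IsFiniteMeasure μ → μ (Metric.ball (0 : Euc 2) R₀)ᶜ = 0 →
      ∀ τ : ℝ, 0 < τ → τ < 1 →
      ∀ (ω p : Euc 2), ‖ω‖ = 1 → ‖p‖ = 1 → (inner ℝ ω p : ℝ) = 0 →
      ∀ t : ℝ,
        (∫⁻ x, ENNReal.ofReal (ker1 τ (t - (inner ℝ x ω : ℝ))) ∂μ) ≤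
          ENNReal.ofReal C *
            ∫⁻ s in Set.Icc (-(2 * R)) (2 * R),
              ∫⁻ y, ENNReal.ofReal (trKer 2 (τ + 1) R (t • ω + s • p - y)) ∂μ ∂volume := by
  refine ⟨4, by norm_num, fun R₀ hR₀ => ⟨R₀ + 2, by linarith, ?_⟩⟩
  intro μ _ hμ τ hτ₀ hτ₁ ω p hω hp hωp t
  have hsupp : ∀ᵐ x ∂μ, ‖x‖ < R₀ := by
    simpa [ae_iff, compl_def, mem_ball_zero_iff] using hμ
  have hmeas : Measurable (Function.uncurry fun (y : Euc 2) (s : ℝ) =>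
      ENNReal.ofReal (trKer 2 (τ + 1) (R₀ + 2) (t • ω + s • p - y))) :=
    ENNReal.measurable_ofReal.comp ((measurable_trKer _ _ _).comp (by fun_prop))
  calc ∫⁻ x, ENNReal.ofReal (ker1 τ (t - ⟪x, ω⟫)) ∂μ
      ≤ ∫⁻ x, ENNReal.ofReal 4 * ∫⁻ s in Icc (-(2 * (R₀ + 2))) (2 * (R₀ + 2)),
          ENNReal.ofReal (trKer 2 (τ + 1) (R₀ + 2) (t • ω + s • p - x)) ∂volume ∂μ :=
        lintegral_mono_ae <| hsupp.mono fun x hx =>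
          ofReal_ker1_le_lintegral_trKer hτ₀ hτ₁.le hω hp hωp (by linarith) (by linarith)
    _ = ENNReal.ofReal 4 * ∫⁻ s in Icc (-(2 * (R₀ + 2))) (2 * (R₀ + 2)),
          ∫⁻ y, ENNReal.ofReal (trKer 2 (τ + 1) (R₀ + 2) (t • ω + s • p - y)) ∂μ ∂volume := by
        rw [lintegral_const_mul' _ _ ENNReal.ofReal_ne_top,
          lintegral_lintegral_swap hmeas.aemeasurable]
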